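/- arXiv:2212.05674 — 3 statements merged into one kernel-verified Lean document; each statement's English description precedes it below -/
import Mathlib

section
/- There exists r₀ > 0 such that for every r with 0 < r ≤ r₀, the solution W̃_r of the F̃-ODE with initial slope r satisfies W̃_r(x) < 0 for all x ≥ 0, and W̃_r attains a strict local maximum, i.e., there exists ξ ≥ 0 with W̃_r'(ξ) = 0 and W̃_r''(ξ) < 0. -/
open Set Filter Topology

/-- The Legendre–Fenchel transform `F(y) = sup_{u ≥ 0} (u·y − C(u))`. -/
noncomputable def LF (C : ℝ → ℝ) (y : ℝ) : ℝ :=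
  sSup ((fun u => u * y - C u) '' Set.Ici (0 : ℝ))

/-- The linear extension `F̃` of the Legendre transform: `F̃(y) = F(y)` for `y ≤ -δ`, and
`F̃(y) = h(-δ)·(y+δ) + F(-δ)` for `y > -δ`, where `h = (C')⁻¹`. -/
noncomputable def Ftilde (C h : ℝ → ℝ) (δ : ℝ) (y : ℝ) : ℝ :=
  if y ≤ -δ then LF C y else h (-δ) * (y + δ) + LF C (-δ)

/-- `W` solves the `F̃`-ODE
`(σ²/2)W'' − F̃'(W)W' − θxW' − (θ+α)W = 0` on `[0,∞)` with `W(0) = -p`, `W'(0) = r`. -/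
def SolvesFtildeODE (C h : ℝ → ℝ) (δ σ θ α p r : ℝ) (W : ℝ → ℝ) : Prop :=
  ContDiff ℝ 2 W ∧ W 0 = -p ∧ deriv W 0 = r ∧
  ∀ x ≥ (0 : ℝ),
    σ ^ 2 / 2 * deriv (deriv W) x - deriv (Ftilde C h δ) (W x) * deriv W x
      - θ * x * deriv W x - (θ + α) * W x = 0

/-!
`F̃'` is bounded: since `C ≥ 0`, only `u ≤ C(0)/ε` contribute to the
supremum defining `F(y)` for `y ≤ -ε`, so `F` is `C(0)/ε`-Lipschitz there, and `F̃` is affine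
beyond `-δ`. The equation thus reads `(σ²/2) W'' = b(x) W' + (θ+α) W` with `b` bounded on
`[0, 1]`. For a small slope `r`, the line `r - c x` is a barrier for `W'`: where `W'` touches
it, `W'` lies in `[0, r]` and `W` is still close to `-p`, which forces `W'' < -c`. Hence `W'`
vanishes at some `ξ ≤ r/c` while `W < 0`. At any critical point where `W < 0` the equation
gives `W'' < 0`, so `W'` cannot become positive after `ξ`, and `W` stays negative.
-/

lemma nonneg_of_antitoneOn_of_tendsto_zero {C : ℝ → ℝ} (hCanti : AntitoneOn C (Ici 0))
    (hClim : Tendsto C atTop (𝓝 0)) {u : ℝ} (hu : 0 ≤ u) : 0 ≤ C u :=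
  le_of_tendsto hClim <| (eventually_ge_atTop u).mono fun _ hv => hCanti hu (hu.trans hv) hv

section LegendreTransform

variable {C : ℝ → ℝ}

lemma bddAbove_LF_image (hC : ∀ u ≥ (0 : ℝ), 0 ≤ C u) {y : ℝ} (hy : y ≤ 0) :
    BddAbove ((fun u => u * y - C u) '' Ici (0 : ℝ)) := by
  refine ⟨0, ?_⟩
  rintro _ ⟨u, hu, rfl⟩
  nlinarith [hC u hu, mem_Ici.mp hu]

lemma le_LF (hC : ∀ u ≥ (0 : ℝ), 0 ≤ C u) {y u : ℝ} (hy : y ≤ 0) (hu : 0 ≤ u) :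
    u * y - C u ≤ LF C y :=
  le_csSup (bddAbove_LF_image hC hy) ⟨u, hu, rfl⟩

lemma lipschitzOnWith_LF (hC : ∀ u ≥ (0 : ℝ), 0 ≤ C u) {ε : ℝ} (hε : 0 < ε) :
    LipschitzOnWith (C 0 / ε).toNNReal (LF C) (Iic (-ε)) := by
  refine LipschitzOnWith.of_le_add_mul' _ fun a ha b hb => ?_
  have ha : a ≤ -ε := ha
  have hb : b ≤ -ε := hb
  have hK : 0 ≤ C 0 / ε * dist a b := mul_nonneg (div_nonneg (hC 0 le_rfl) hε.le) dist_nonneg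
  refine csSup_le (nonempty_Ici.image _) ?_
  rintro _ ⟨u, hu, rfl⟩
  have hu : 0 ≤ u := hu
  rcases le_or_gt u (C 0 / ε) with huK | huK
  · have hshift : u * (a - b) ≤ C 0 / ε * dist a b :=
      calc u * (a - b) ≤ u * dist a b := mul_le_mul_of_nonneg_left (le_abs_self _) hu
        _ ≤ C 0 / ε * dist a b := mul_le_mul_of_nonneg_right huK dist_nonneg
    linarith [le_LF hC (hb.trans (neg_nonpos.2 hε.le)) hu]
  · -- beyond `C(0)/ε` the affine term alone is below `-C(0) ≤ F(b)`
    have hCu : C 0 < u * ε := (div_lt_iff₀ hε).mp huK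
    have hF : -C 0 ≤ LF C b := by
      simpa using le_LF hC (hb.trans (neg_nonpos.2 hε.le)) le_rfl
    nlinarith [hC u hu]

lemma abs_deriv_LF_le (hC : ∀ u ≥ (0 : ℝ), 0 ≤ C u) {ε y : ℝ} (hε : 0 < ε) (hy : y < -ε) :
    |deriv (LF C) y| ≤ C 0 / ε := by
  have := norm_deriv_le_of_lipschitzOn (Iic_mem_nhds hy) (lipschitzOnWith_LF hC hε)
  rwa [Real.norm_eq_abs, Real.coe_toNNReal _ (div_nonneg (hC 0 le_rfl) hε.le)] at this

end LegendreTransform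

section Ftilde

variable {C : ℝ → ℝ} (h : ℝ → ℝ) {δ : ℝ}

lemma deriv_Ftilde_of_lt {y : ℝ} (hy : y < -δ) :
    deriv (Ftilde C h δ) y = deriv (LF C) y :=
  EventuallyEq.deriv_eq <| by
    filter_upwards [Iio_mem_nhds hy] with z hz using if_pos hz.le

lemma deriv_Ftilde_of_gt {y : ℝ} (hy : -δ < y) : deriv (Ftilde C h δ) y = h (-δ) := by
  have hlin : Ftilde C h δ =ᶠ[𝓝 y] fun z => h (-δ) * (z + δ) + LF C (-δ) := by
    filter_upwards [Ioi_mem_nhds hy] with z hz using if_neg (not_le.mpr hz)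
  rw [hlin.deriv_eq]
  exact ((((hasDerivAt_id y).add_const δ).const_mul (h (-δ))).add_const _).deriv.trans
    (mul_one _)

lemma exists_abs_deriv_Ftilde_le (hC : ∀ u ≥ (0 : ℝ), 0 ≤ C u) (hδ : 0 < δ) :
    ∃ M, ∀ y, |deriv (Ftilde C h δ) y| ≤ M := by
  refine ⟨max (C 0 / δ) (max |h (-δ)| |deriv (Ftilde C h δ) (-δ)|), fun y => ?_⟩
  rcases lt_trichotomy y (-δ) with hy | rfl | hy
  · rw [deriv_Ftilde_of_lt h hy]
    exact (abs_deriv_LF_le hC hδ hy).trans (le_max_left _ _)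
  · exact (le_max_right _ _).trans (le_max_right _ _)
  · rw [deriv_Ftilde_of_gt h hy]
    exact (le_max_left _ _).trans (le_max_right _ _)

end Ftilde

lemma image_sub_le_mul_sub_of_deriv_le_Icc {f : ℝ → ℝ} (hf : Differentiable ℝ f) {a x m : ℝ}
    (hax : a ≤ x) (hd : ∀ y ∈ Icc a x, deriv f y ≤ m) : f x - f a ≤ m * (x - a) :=
  (convex_Icc a x).image_sub_le_mul_sub_of_deriv_le hf.continuous.continuousOn
    hf.differentiableOn (fun y hy => hd y (interior_subset hy)) a (left_mem_Icc.2 hax) x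
    (right_mem_Icc.2 hax) hax

theorem nonpos_of_deriv_neg_at_first_zero {u u' : ℝ → ℝ} {a b : ℝ} (hu : Continuous u)
    (hu' : ∀ x ∈ Ico a b, HasDerivAt u (u' x) x) (ha : u a ≤ 0)
    (hzero : ∀ x ∈ Ico a b, (∀ y ∈ Icc a x, u y ≤ 0) → u x = 0 → u' x < 0) :
    ∀ x ∈ Icc a b, u x ≤ 0 := by
  by_contra! ⟨x₀, hx₀, hux₀⟩
  set S := {x ∈ Icc a b | 0 < u x}
  have hS : S.Nonempty := ⟨x₀, hx₀, hux₀⟩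
  have hglb : IsGLB S (sInf S) := isGLB_csInf hS ⟨a, fun x hx => hx.1.1⟩
  set t := sInf S
  have ht : t ∈ Icc a b := closure_minimal (fun x hx => hx.1) isClosed_Icc (hglb.mem_closure hS)
  have hut_nonneg : 0 ≤ u t :=
    closure_minimal (fun x hx => le_of_lt hx.2) (isClosed_le continuous_const hu)
      (hglb.mem_closure hS)
  have hbefore : ∀ y ∈ Ico a t, u y ≤ 0 := fun y hy =>
    not_lt.mp fun hy0 => (hglb.1 ⟨⟨hy.1, hy.2.le.trans ht.2⟩, hy0⟩).not_gt hy.2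
  have hprefix : ∀ y ∈ Icc a t, u y ≤ 0 := by
    intro y hy
    rcases hy.2.lt_or_eq with hyt | rfl
    · exact hbefore y ⟨hy.1, hyt⟩
    rcases ht.1.lt_or_eq with hat | hat
    · exact closure_minimal hbefore (isClosed_le hu continuous_const)
        (by rw [closure_Ico hat.ne]; exact right_mem_Icc.2 hat.le)
    · rwa [← hat]
  have hut : u t = 0 := le_antisymm (hprefix t (right_mem_Icc.2 ht.1)) hut_nonneg
  have htb : t < b := ((hglb.1 ⟨hx₀, hux₀⟩).lt_of_ne (by rintro rfl; linarith)).trans_le hx₀.2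
  have hneg := hzero t ⟨ht.1, htb⟩ hprefix hut
  obtain ⟨t', htt', hslope⟩ := (nhdsGT_basis t).eventually_iff.mp
    (((hu' t ⟨ht.1, htb⟩).hasDerivWithinAt (s := Ioi t)).limsup_slope_le' (lt_irrefl t) hneg)
  obtain ⟨z, hzS, htz, hzt'⟩ := hglb.exists_between' (fun htS => by linarith [htS.2]) htt'
  have hz := hslope ⟨htz, hzt'⟩
  rw [slope_def_field, hut, sub_zero, div_neg_iff] at hz
  rcases hz with ⟨_, _⟩ | ⟨_, _⟩ <;> linarith [hzS.2]

section ODE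

variable {W b : ℝ → ℝ} {κ γ : ℝ}

lemma ode_deriv_deriv_neg_of_deriv_eq_zero (hκ : 0 < κ) (hγ : 0 < γ)
    (hode : ∀ x ≥ (0 : ℝ), κ * deriv (deriv W) x = b x * deriv W x + γ * W x)
    {x : ℝ} (hx : 0 ≤ x) (hW'x : deriv W x = 0) (hWx : W x < 0) : deriv (deriv W) x < 0 := by
  have h := hode x hx
  rw [hW'x, mul_zero, zero_add] at h
  exact neg_of_mul_neg_right (h ▸ mul_neg_of_pos_of_neg hγ hWx) hκ.le

lemma ode_deriv_nonpos_of_deriv_eq_zero (hκ : 0 < κ) (hγ : 0 < γ) (hW : Differentiable ℝ W)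
    (hW' : Differentiable ℝ (deriv W))
    (hode : ∀ x ≥ (0 : ℝ), κ * deriv (deriv W) x = b x * deriv W x + γ * W x)
    {ξ : ℝ} (hξ : 0 ≤ ξ) (hW'ξ : deriv W ξ = 0) (hWξ : W ξ < 0) {x : ℝ} (hx : ξ ≤ x) :
    deriv W x ≤ 0 := by
  refine nonpos_of_deriv_neg_at_first_zero hW'.continuous (fun y _ => (hW' y).hasDerivAt)
    hW'ξ.le (fun y hy hpre hy0 => ?_) x ⟨hx, le_rfl⟩
  have hWy : W y - W ξ ≤ 0 * (y - ξ) := image_sub_le_mul_sub_of_deriv_le_Icc hW hy.1 hpre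
  exact ode_deriv_deriv_neg_of_deriv_eq_zero hκ hγ hode (hξ.trans hy.1) hy0 (by linarith)

lemma ode_deriv_le_barrier (hκ : 0 < κ) (hγ : 0 ≤ γ) (hW : Differentiable ℝ W)
    (hW' : Differentiable ℝ (deriv W))
    (hode : ∀ x ≥ (0 : ℝ), κ * deriv (deriv W) x = b x * deriv W x + γ * W x)
    {p r c B : ℝ} (hc : 0 < c) (hW0 : W 0 = -p) (hW'0 : deriv W 0 = r)
    (hb : ∀ x ∈ Icc 0 (r / c), |b x| ≤ B) (hsmall : B * r + γ * (r * (r / c) - p) < -(κ * c)) :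
    ∀ x ∈ Icc 0 (r / c), deriv W x ≤ r - c * x := by
  have hline : ∀ x, HasDerivAt (fun x => deriv W x - (r - c * x)) (deriv (deriv W) x + c) x :=
    fun x => ((hW' x).hasDerivAt.sub (((hasDerivAt_id x).const_mul c).const_sub r)).congr_deriv
      (by ring)
  intro x hx
  suffices deriv W x - (r - c * x) ≤ 0 by linarith
  refine nonpos_of_deriv_neg_at_first_zero (u := fun x => deriv W x - (r - c * x))
    (hW'.continuous.sub (by fun_prop)) (fun x _ => hline x) (by simp [hW'0])
    (fun x hx hpre hx0 => ?_) x hx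
  beta_reduce at hpre hx0
  have hr : 0 ≤ r := (div_pos_iff_of_pos_right hc).mp (hx.1.trans_lt hx.2) |>.le
  have hcx : c * x ≤ r := by have := (le_div_iff₀ hc).mp hx.2.le; linarith
  have hW'x : deriv W x = r - c * x := by linarith
  have hWx : W x - W 0 ≤ r * (x - 0) := image_sub_le_mul_sub_of_deriv_le_Icc hW hx.1
    fun y hy => by nlinarith [hpre y hy, hy.1]
  have hrx : r * x ≤ r * (r / c) := mul_le_mul_of_nonneg_left hx.2.le hr
  have hbx := hb x ⟨hx.1, hx.2.le⟩
  have hW'x_abs : |deriv W x| ≤ r := by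
    rw [hW'x, abs_of_nonneg (by linarith)]
    linarith [mul_nonneg hc.le hx.1]
  have hdrift : b x * deriv W x ≤ B * r :=
    calc b x * deriv W x ≤ |b x| * |deriv W x| := (le_abs_self _).trans (abs_mul _ _).le
      _ ≤ B * r := mul_le_mul hbx hW'x_abs (abs_nonneg _) ((abs_nonneg _).trans hbx)
  have hdiscount : γ * W x ≤ γ * (r * (r / c) - p) :=
    mul_le_mul_of_nonneg_left (by linarith) hγ
  have : κ * (deriv (deriv W) x + c) < 0 := by linarith [hode x hx.1]
  exact neg_of_mul_neg_right this hκ.le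

theorem ode_neg_and_exists_strict_max (hκ : 0 < κ) (hγ : 0 < γ) (hW : Differentiable ℝ W)
    (hW' : Differentiable ℝ (deriv W))
    (hode : ∀ x ≥ (0 : ℝ), κ * deriv (deriv W) x = b x * deriv W x + γ * W x)
    {p r c B : ℝ} (hr : 0 ≤ r) (hc : 0 < c) (hW0 : W 0 = -p) (hW'0 : deriv W 0 = r)
    (hb : ∀ x ∈ Icc 0 (r / c), |b x| ≤ B) (hsmall : B * r + γ * (r * (r / c) - p) < -(κ * c)) :
    (∀ x ≥ 0, W x < 0) ∧ ∃ ξ ≥ 0, deriv W ξ = 0 ∧ deriv (deriv W) ξ < 0 := by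
  have hrc : 0 ≤ r / c := div_nonneg hr hc.le
  have hbar := ode_deriv_le_barrier hκ hγ.le hW hW' hode hc hW0 hW'0 hb hsmall
  have hB : 0 ≤ B := (abs_nonneg _).trans (hb 0 (left_mem_Icc.2 hrc))
  have hrp : r * (r / c) < p := by nlinarith [mul_nonneg hB hr, mul_pos hκ hc]
  have hneg_early : ∀ x ∈ Icc 0 (r / c), W x < 0 := fun x hx => by
    have hWx : W x - W 0 ≤ r * (x - 0) := image_sub_le_mul_sub_of_deriv_le_Icc hW hx.1
      fun y hy => by nlinarith [hbar y ⟨hy.1, hy.2.trans hx.2⟩, hy.1]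
    nlinarith [mul_le_mul_of_nonneg_left hx.2 hr]
  obtain ⟨ξ, hξ, hW'ξ⟩ : ∃ ξ ∈ Icc 0 (r / c), deriv W ξ = 0 :=
    intermediate_value_Icc' hrc hW'.continuous.continuousOn
      ⟨by linarith [hbar _ (right_mem_Icc.2 hrc), mul_div_cancel₀ r hc.ne'], hW'0 ▸ hr⟩
  have hWξ := hneg_early ξ hξ
  refine ⟨fun x hx => ?_, ξ, hξ.1, hW'ξ,
    ode_deriv_deriv_neg_of_deriv_eq_zero hκ hγ hode hξ.1 hW'ξ hWξ⟩
  rcases le_or_gt x ξ with hxξ | hξx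
  · exact hneg_early x ⟨hx, hxξ.trans hξ.2⟩
  · have : W x - W ξ ≤ 0 * (x - ξ) := image_sub_le_mul_sub_of_deriv_le_Icc hW hξx.le
      fun y hy => ode_deriv_nonpos_of_deriv_eq_zero hκ hγ hW hW' hode hξ.1 hW'ξ hWξ hy.1
    linarith

theorem exists_slope_ode_neg_and_exists_strict_max (hκ : 0 < κ) (hγ : 0 < γ) {p B : ℝ}
    (hp : 0 < p) (hB : 0 ≤ B) :
    ∃ r₀ > 0, ∀ r, 0 < r → r ≤ r₀ → ∀ W b : ℝ → ℝ, Differentiable ℝ W →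
      Differentiable ℝ (deriv W) →
      (∀ x ≥ (0 : ℝ), κ * deriv (deriv W) x = b x * deriv W x + γ * W x) →
      W 0 = -p → deriv W 0 = r → (∀ x ∈ Icc 0 1, |b x| ≤ B) →
      (∀ x ≥ 0, W x < 0) ∧ ∃ ξ ≥ 0, deriv W ξ = 0 ∧ deriv (deriv W) ξ < 0 := by
  obtain ⟨c, hc, hκc⟩ : ∃ c > 0, κ * c = γ * p / 4 :=
    ⟨γ * p / (4 * κ), by positivity, by field_simp⟩
  refine ⟨min (min c (p / 4)) (γ * p / (4 * (B + 1))), by positivity,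
    fun r hr hr₀ W b hW hW' hode hW0 hW'0 hb => ?_⟩
  have hrc : r ≤ c := hr₀.trans ((min_le_left _ _).trans (min_le_left _ _))
  have hrp : r ≤ p / 4 := hr₀.trans ((min_le_left _ _).trans (min_le_right _ _))
  have hrB : (B + 1) * r ≤ γ * p / 4 := by
    have := hr₀.trans (min_le_right _ _)
    rw [le_div_iff₀ (by positivity)] at this
    linarith
  have hrc1 : r / c ≤ 1 := (div_le_one hc).mpr hrc
  refine ode_neg_and_exists_strict_max hκ hγ hW hW' hode hr.le hc hW0 hW'0
    (fun x hx => hb x ⟨hx.1, hx.2.trans hrc1⟩) ?_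
  have : r * (r / c) ≤ r := mul_le_of_le_one_right hr.le hrc1
  nlinarith

end ODE

theorem statement4_general
    (C h : ℝ → ℝ) (σ θ α p δ : ℝ)
    (hσ : 0 < σ) (hθ : 0 < θ) (hα : 0 < α) (hp : 0 < p)
    (hCanti : AntitoneOn C (Set.Ici 0))
    (hClim : Tendsto C atTop (nhds 0))
    (hδ0 : 0 < δ) :
    ∃ r₀ : ℝ, 0 < r₀ ∧
      ∀ r : ℝ, 0 < r → r ≤ r₀ →
        ∀ W : ℝ → ℝ, SolvesFtildeODE C h δ σ θ α p r W →
          (∀ x ≥ (0 : ℝ), W x < 0) ∧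
          ∃ ξ ≥ (0 : ℝ), deriv W ξ = 0 ∧ deriv (deriv W) ξ < 0 := by
  obtain ⟨M, hM⟩ := exists_abs_deriv_Ftilde_le h
    (fun _ hu => nonneg_of_antitoneOn_of_tendsto_zero hCanti hClim hu) hδ0
  obtain ⟨r₀, hr₀, hsmall⟩ := exists_slope_ode_neg_and_exists_strict_max
    (half_pos (pow_pos hσ 2)) (add_pos hθ hα) hp (B := M + θ)
    (add_nonneg ((abs_nonneg _).trans (hM 0)) hθ.le)
  refine ⟨r₀, hr₀, fun r hr hrr₀ W ⟨hW, hW0, hW'0, hode⟩ =>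
    hsmall r hr hrr₀ W (fun x => deriv (Ftilde C h δ) (W x) + θ * x)
      (hW.differentiable two_ne_zero) hW.differentiable_deriv_two
      (fun x hx => by linear_combination hode x hx) hW0 hW'0 fun x hx => ?_⟩
  calc |deriv (Ftilde C h δ) (W x) + θ * x|
      ≤ |deriv (Ftilde C h δ) (W x)| + |θ * x| := abs_add_le _ _
    _ ≤ M + θ := add_le_add (hM _) <| by
        rw [abs_of_nonneg (mul_nonneg hθ.le hx.1)]; nlinarith [hx.2]

/-- For all sufficiently small initial slopes `0 < r ≤ r₀`, the solution `W̃_r` of the `F̃`-ODE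
stays strictly negative on `[0,∞)` and attains a strict local maximum: there is `ξ ≥ 0` with
`W̃_r'(ξ) = 0` and `W̃_r''(ξ) < 0`. -/
theorem statement4
    (C h : ℝ → ℝ) (σ θ α p δ : ℝ)
    (hσ : 0 < σ) (hθ : 0 < θ) (hα : 0 < α) (hp : 0 < p)
    (hC2 : ContDiff ℝ 2 C)
    (hCanti : AntitoneOn C (Set.Ici 0))
    (hCconv : ConvexOn ℝ (Set.Ici 0) C)
    (hC0 : 0 < C 0)
    (hClim : Tendsto C atTop (nhds 0))
    (hC'' : ∀ u ≥ (0 : ℝ), 0 < deriv (deriv C) u)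
    (hC'0 : deriv C 0 < 0)
    (hinv₁ : ∀ u ≥ (0 : ℝ), h (deriv C u) = u)
    (hinv₂ : ∀ y : ℝ, deriv C 0 ≤ y → y < 0 → 0 ≤ h y ∧ deriv C (h y) = y)
    (hδ0 : 0 < δ) (hδ : δ < min p (-deriv C 0)) :
    ∃ r₀ : ℝ, 0 < r₀ ∧
      ∀ r : ℝ, 0 < r → r ≤ r₀ →
        ∀ W : ℝ → ℝ, SolvesFtildeODE C h δ σ θ α p r W →
          (∀ x ≥ (0 : ℝ), W x < 0) ∧
          ∃ ξ ≥ (0 : ℝ), deriv W ξ = 0 ∧ deriv (deriv W) ξ < 0 :=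
  statement4_general C h σ θ α p δ hσ hθ hα hp hCanti hClim hδ0
end

section
/- For every r ≥ 0 there exists a unique twice continuously differentiable function W̃_r : [0,∞) → ℝ solving the F̃-ODE with initial slope r, i.e., satisfying (σ²/2)·W̃_r''(x) − F̃'(W̃_r(x))·W̃_r'(x) − θ·x·W̃_r'(x) − (θ+α)·W̃_r(x) = 0 for all x ≥ 0, W̃_r(0) = −p, and W̃_r'(0) = r; in particular the solution exists globally on [0,∞). -/
open Set Filter

open Metric NNReal

theorem ConvexOn.add_deriv_mul_sub_le {S : Set ℝ} {f : ℝ → ℝ} {x y : ℝ} (hf : ConvexOn ℝ S f)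
    (hx : x ∈ S) (hy : y ∈ S) (hfx : DifferentiableAt ℝ f x) :
    f x + deriv f x * (y - x) ≤ f y := by
  rcases lt_trichotomy x y with hxy | rfl | hxy
  · have := hf.deriv_le_slope hx hy hxy hfx
    rw [slope_def_field, le_div_iff₀ (sub_pos.mpr hxy)] at this
    linarith
  · simp
  · have := hf.slope_le_deriv hy hx hxy hfx
    rw [slope_def_field, div_le_iff₀ (sub_pos.mpr hxy)] at this
    linarith

theorem hasDerivAt_of_add_mul_sub_le {f g : ℝ → ℝ} {y₀ : ℝ}
    (hsub : ∀ y₁ y₂, f y₁ + g y₁ * (y₂ - y₁) ≤ f y₂) (hg : ContinuousAt g y₀) :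
    HasDerivAt f (g y₀) y₀ := by
  rw [hasDerivAt_iff_isLittleO, Asymptotics.isLittleO_iff]
  intro c hc
  filter_upwards [Metric.tendsto_nhds.mp hg c hc] with y hy
  have h₁ := hsub y₀ y
  have h₂ := hsub y y₀
  rw [Real.dist_eq] at hy
  calc ‖f y - f y₀ - (y - y₀) • g y₀‖ ≤ |g y - g y₀| * |y - y₀| := by
        rw [Real.norm_eq_abs, smul_eq_mul, ← abs_mul, abs_le]
        have := le_abs_self ((g y - g y₀) * (y - y₀))
        constructor <;> nlinarith [abs_nonneg ((g y - g y₀) * (y - y₀))]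
    _ ≤ c * ‖y - y₀‖ := by
        rw [Real.norm_eq_abs]; exact mul_le_mul_of_nonneg_right hy.le (abs_nonneg _)

theorem lipschitzOnWith_of_leftInvOn {φ ψ : ℝ → ℝ} {s t : Set ℝ} {m : ℝ≥0} (hm : 0 < m)
    (hφ : ∀ u ∈ t, ∀ u' ∈ t, u ≤ u' → m * (u' - u) ≤ φ u' - φ u)
    (hψ : MapsTo ψ s t) (hφψ : LeftInvOn φ ψ s) : LipschitzOnWith m⁻¹ ψ s := by
  refine LipschitzOnWith.of_dist_le_mul fun y hy y' hy' => ?_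
  rw [Real.dist_eq, Real.dist_eq, NNReal.coe_inv, ← div_eq_inv_mul,
    le_div_iff₀ (by exact_mod_cast hm)]
  wlog hle : ψ y' ≤ ψ y generalizing y y'
  · rw [abs_sub_comm, abs_sub_comm y]
    exact this y' hy' y hy (le_of_not_ge hle)
  have := hφ _ (hψ hy') _ (hψ hy) hle
  rw [hφψ hy, hφψ hy'] at this
  rw [abs_of_nonneg (sub_nonneg.mpr hle), mul_comm]
  exact this.trans (le_abs_self _)

noncomputable def ftildeDeriv (C h : ℝ → ℝ) (δ y : ℝ) : ℝ :=
  h (max (min y (-δ)) (deriv C 0))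

section FtildeDeriv

variable {C h : ℝ → ℝ} {δ : ℝ}
  (hCconv : ConvexOn ℝ (Ici 0) C) (hC2 : ContDiff ℝ 2 C)
  (hC'' : ∀ u ≥ (0 : ℝ), 0 < deriv (deriv C) u)
  (hinv₁ : ∀ u ≥ (0 : ℝ), h (deriv C u) = u)
  (hinv₂ : ∀ y : ℝ, deriv C 0 ≤ y → y < 0 → 0 ≤ h y ∧ deriv C (h y) = y)
  (hδ0 : 0 < δ) (hδ : δ < -deriv C 0)

include hC2 hC'' in
theorem strictMonoOn_deriv_of_deriv2_pos : StrictMonoOn (deriv C) (Ici 0) :=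
  strictMonoOn_of_deriv_pos (convex_Ici 0) (hC2.continuous_deriv one_le_two).continuousOn
    fun u hu => hC'' u (interior_subset hu)

include hC2 hC'' hinv₂ hδ0 in
theorem mapsTo_inv_deriv : MapsTo h (Icc (deriv C 0) (-δ)) (Icc 0 (h (-δ))) := by
  intro y hy
  obtain ⟨hy0, hyd⟩ := hinv₂ y hy.1 (by linarith [hy.2])
  obtain ⟨hM0, hMd⟩ := hinv₂ (-δ) (hy.1.trans hy.2) (by linarith)
  refine ⟨hy0, ?_⟩
  rw [← (strictMonoOn_deriv_of_deriv2_pos hC2 hC'').le_iff_le hy0 hM0, hyd, hMd]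
  exact hy.2

include hδ in
theorem clamp_mem_Icc (y : ℝ) : max (min y (-δ)) (deriv C 0) ∈ Icc (deriv C 0) (-δ) :=
  ⟨le_max_right _ _, max_le (min_le_right _ _) (by linarith)⟩

include hinv₂ hδ0 hδ in
theorem deriv_ftildeDeriv (y : ℝ) :
    0 ≤ ftildeDeriv C h δ y ∧ deriv C (ftildeDeriv C h δ y) = max (min y (-δ)) (deriv C 0) :=
  hinv₂ _ (le_max_right _ _) (by linarith [(clamp_mem_Icc hδ y).2])

include hinv₁ in
theorem ftildeDeriv_of_le {y : ℝ} (hy : y ≤ deriv C 0) : ftildeDeriv C h δ y = 0 := by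
  rw [ftildeDeriv, max_eq_right ((min_le_left _ _).trans hy)]
  exact hinv₁ 0 le_rfl

include hδ in
theorem ftildeDeriv_of_ge {y : ℝ} (hy : -δ ≤ y) : ftildeDeriv C h δ y = h (-δ) := by
  rw [ftildeDeriv, min_eq_right hy, max_eq_left (by linarith)]

include hC2 hC'' hinv₂ hδ0 hδ in
theorem ftildeDeriv_mem_Icc (y : ℝ) : ftildeDeriv C h δ y ∈ Icc 0 (h (-δ)) :=
  mapsTo_inv_deriv hC2 hC'' hinv₂ hδ0 (clamp_mem_Icc hδ y)

include hCconv hC2 hinv₁ hinv₂ hδ0 hδ in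
theorem mul_sub_le_ftildeDeriv {u y : ℝ} (hu : 0 ≤ u) (huy : y ≤ -δ ∨ u ≤ h (-δ)) :
    u * y - C u ≤ ftildeDeriv C h δ y * y - C (ftildeDeriv C h δ y) := by
  obtain ⟨hg0, hgd⟩ := deriv_ftildeDeriv hinv₂ hδ0 hδ y
  have htangent := hCconv.add_deriv_mul_sub_le hg0 hu
    ((hC2.differentiable two_ne_zero).differentiableAt)
  suffices (u - ftildeDeriv C h δ y) * (y - max (min y (-δ)) (deriv C 0)) ≤ 0 by
    rw [hgd] at htangent; nlinarith
  rcases le_or_gt y (deriv C 0) with hya | hya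
  · rw [ftildeDeriv_of_le hinv₁ hya, max_eq_right ((min_le_left _ _).trans hya)]
    exact mul_nonpos_of_nonneg_of_nonpos (by linarith) (by linarith)
  rcases le_or_gt y (-δ) with hyδ | hyδ
  · rw [min_eq_left hyδ, max_eq_left hya.le, sub_self, mul_zero]
  · rw [ftildeDeriv_of_ge hδ hyδ.le, min_eq_right hyδ.le, max_eq_left (by linarith)]
    exact mul_nonpos_of_nonpos_of_nonneg (by linarith [huy.resolve_left hyδ.not_ge])
      (by linarith)

include hC2 hC'' hinv₂ hδ0 hδ in
theorem exists_lipschitzWith_ftildeDeriv : ∃ K, LipschitzWith K (ftildeDeriv C h δ) := by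
  have hM : 0 ≤ h (-δ) := (hinv₂ (-δ) (by linarith) (by linarith)).1
  obtain ⟨u₁, hu₁, hmin⟩ := isCompact_Icc.exists_isMinOn (nonempty_Icc.mpr hM)
    ((hC2.deriv' (n := 1)).continuous_deriv le_rfl).continuousOn
  have hm : 0 < deriv (deriv C) u₁ := hC'' u₁ hu₁.1
  have hexpand := (convex_Icc 0 (h (-δ))).mul_sub_le_image_sub_of_le_deriv
    (hC2.continuous_deriv one_le_two).continuousOn
    (hC2.differentiable_deriv_two.differentiableOn) fun u hu => hmin (interior_subset hu)
  have hinv : LipschitzOnWith (Real.toNNReal (deriv (deriv C) u₁))⁻¹ h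
      (Icc (deriv C 0) (-δ)) :=
    lipschitzOnWith_of_leftInvOn (Real.toNNReal_pos.mpr hm)
      (by simpa only [Real.coe_toNNReal _ hm.le] using hexpand)
      (mapsTo_inv_deriv hC2 hC'' hinv₂ hδ0)
      fun y hy => (hinv₂ y hy.1 (by linarith [hy.2])).2
  have hclamp : LipschitzWith 1 fun y => max (min y (-δ)) (deriv C 0) :=
    (LipschitzWith.id.min_const _).max_const _
  exact ⟨_, lipschitzOnWith_univ.mp <| hinv.comp hclamp.lipschitzOnWith
    fun y _ => clamp_mem_Icc hδ y⟩

include hCconv hC2 hinv₁ hinv₂ hδ0 hδ in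
theorem LF_eq_of_le {y : ℝ} (hy : y ≤ -δ) :
    LF C y = ftildeDeriv C h δ y * y - C (ftildeDeriv C h δ y) :=
  IsGreatest.csSup_eq ⟨⟨_, (deriv_ftildeDeriv hinv₂ hδ0 hδ y).1, rfl⟩, by
    rintro _ ⟨u, hu, rfl⟩
    exact mul_sub_le_ftildeDeriv hCconv hC2 hinv₁ hinv₂ hδ0 hδ hu (.inl hy)⟩

include hCconv hC2 hinv₁ hinv₂ hδ0 hδ in
theorem Ftilde_eq (y : ℝ) :
    Ftilde C h δ y = ftildeDeriv C h δ y * y - C (ftildeDeriv C h δ y) := by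
  unfold Ftilde
  split_ifs with hy
  · exact LF_eq_of_le hCconv hC2 hinv₁ hinv₂ hδ0 hδ hy
  · rw [LF_eq_of_le hCconv hC2 hinv₁ hinv₂ hδ0 hδ le_rfl, ftildeDeriv_of_ge hδ le_rfl,
      ftildeDeriv_of_ge hδ (not_le.mp hy).le]
    ring

include hCconv hC2 hC'' hinv₁ hinv₂ hδ0 hδ in
theorem hasDerivAt_Ftilde (y : ℝ) : HasDerivAt (Ftilde C h δ) (ftildeDeriv C h δ y) y := by
  refine hasDerivAt_of_add_mul_sub_le (fun y₁ y₂ => ?_) ?_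
  · have hg := ftildeDeriv_mem_Icc hC2 hC'' hinv₂ hδ0 hδ y₁
    have := mul_sub_le_ftildeDeriv hCconv hC2 hinv₁ hinv₂ hδ0 hδ hg.1 (y := y₂) (.inr hg.2)
    rw [Ftilde_eq hCconv hC2 hinv₁ hinv₂ hδ0 hδ, Ftilde_eq hCconv hC2 hinv₁ hinv₂ hδ0 hδ]
    linarith
  · obtain ⟨K, hK⟩ := exists_lipschitzWith_ftildeDeriv hC2 hC'' hinv₂ hδ0 hδ
    exact hK.continuous.continuousAt

end FtildeDeriv

section LinearGrowthODE

variable {E : Type*} [NormedAddCommGroup E] {v : ℝ → E → E}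
  (hlip : ∀ T ρ : ℝ, ∃ K, ∀ t ∈ Icc (-T) T, LipschitzOnWith K (v t) (closedBall 0 ρ))

include hlip in
theorem exists_lipschitzOnWith_of_continuousOn {A B : ℝ} {X Y : ℝ → E}
    (hX : ContinuousOn X (Icc A B)) (hY : ContinuousOn Y (Icc A B)) :
    ∃ K ρ, ∀ t ∈ Icc A B, LipschitzOnWith K (v t) (closedBall 0 ρ) ∧
      X t ∈ closedBall 0 ρ ∧ Y t ∈ closedBall 0 ρ := by
  obtain ⟨ρX, hρX⟩ := isCompact_Icc.exists_bound_of_continuousOn hX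
  obtain ⟨ρY, hρY⟩ := isCompact_Icc.exists_bound_of_continuousOn hY
  obtain ⟨K, hK⟩ := hlip (|A| + |B|) (max ρX ρY)
  refine ⟨K, max ρX ρY, fun t ht => ⟨hK t ?_, ?_, ?_⟩⟩
  · exact ⟨by linarith [neg_abs_le A, abs_nonneg B, ht.1],
      by linarith [le_abs_self B, abs_nonneg A, ht.2]⟩
  · exact mem_closedBall_zero_iff.mpr ((hρX t ht).trans (le_max_left _ _))
  · exact mem_closedBall_zero_iff.mpr ((hρY t ht).trans (le_max_right _ _))

variable [NormedSpace ℝ E] (hcont : ∀ x, Continuous (v · x))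

theorem exists_eqOn_hasDerivWithinAt_Icc_of_eq {A c B : ℝ} {X Y : ℝ → E} (hAc : A ≤ c)
    (hcB : c ≤ B) (hX : ∀ t ∈ Icc A c, HasDerivWithinAt X (v t (X t)) (Icc A c) t)
    (hY : ∀ t ∈ Icc c B, HasDerivWithinAt Y (v t (Y t)) (Icc c B) t) (hXY : X c = Y c) :
    ∃ Z : ℝ → E, EqOn Z X (Icc A c) ∧ EqOn Z Y (Icc c B) ∧
      ∀ t ∈ Icc A B, HasDerivWithinAt Z (v t (Z t)) (Icc A B) t := by
  classical
  set Z : ℝ → E := fun s => if s ≤ c then X s else Y s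
  have hZX : EqOn Z X (Icc A c) := fun s hs => if_pos hs.2
  have hZY : EqOn Z Y (Icc c B) := fun s hs => by
    rcases hs.1.eq_or_lt with rfl | hcs
    · exact (if_pos le_rfl).trans hXY
    · exact if_neg hcs.not_ge
  refine ⟨Z, hZX, hZY, fun t ht => ?_⟩
  rw [← Icc_union_Icc_eq_Icc hAc hcB]
  refine HasDerivWithinAt.union ?_ ?_
  · by_cases htc : t ≤ c
    · rw [hZX ⟨ht.1, htc⟩]
      exact (hX t ⟨ht.1, htc⟩).congr hZX (hZX ⟨ht.1, htc⟩)
    · exact HasFDerivWithinAt.of_notMem_closure (by rw [closure_Icc]; exact fun h => htc h.2)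
  · by_cases hct : c ≤ t
    · rw [hZY ⟨hct, ht.2⟩]
      exact (hY t ⟨hct, ht.2⟩).congr hZY (hZY ⟨hct, ht.2⟩)
    · exact HasFDerivWithinAt.of_notMem_closure (by rw [closure_Icc]; exact fun h => hct h.1)

include hlip in
theorem eqOn_Icc_of_hasDerivWithinAt_Ici {A B : ℝ} {X Y : ℝ → E}
    (hX : ContinuousOn X (Icc A B)) (hX' : ∀ t ∈ Ico A B, HasDerivWithinAt X (v t (X t)) (Ici t) t)
    (hY : ContinuousOn Y (Icc A B)) (hY' : ∀ t ∈ Ico A B, HasDerivWithinAt Y (v t (Y t)) (Ici t) t)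
    (hXY : X A = Y A) : EqOn X Y (Icc A B) := by
  obtain ⟨K, ρ, h⟩ := exists_lipschitzOnWith_of_continuousOn hlip hX hY
  exact ODE_solution_unique_of_mem_Icc_right (fun t ht => (h t (Ico_subset_Icc_self ht)).1)
    hX hX' (fun t ht => (h t (Ico_subset_Icc_self ht)).2.1)
    hY hY' (fun t ht => (h t (Ico_subset_Icc_self ht)).2.2) hXY

include hlip in
theorem eqOn_Icc_of_hasDerivAt {A B t₀ : ℝ} {X Y : ℝ → E} (ht₀ : t₀ ∈ Ioo A B)
    (hX : ContinuousOn X (Icc A B)) (hX' : ∀ t ∈ Ioo A B, HasDerivAt X (v t (X t)) t)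
    (hY : ContinuousOn Y (Icc A B)) (hY' : ∀ t ∈ Ioo A B, HasDerivAt Y (v t (Y t)) t)
    (hXY : X t₀ = Y t₀) : EqOn X Y (Icc A B) := by
  obtain ⟨K, ρ, h⟩ := exists_lipschitzOnWith_of_continuousOn hlip hX hY
  exact ODE_solution_unique_of_mem_Icc (fun t ht => (h t (Ioo_subset_Icc_self ht)).1) ht₀
    hX hX' (fun t ht => (h t (Ioo_subset_Icc_self ht)).2.1)
    hY hY' (fun t ht => (h t (Ioo_subset_Icc_self ht)).2.2) hXY

variable [CompleteSpace E]

include hcont hlip in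
theorem exists_hasDerivWithinAt_Icc_of_norm_le {T κ : ℝ} (hκ : 0 < κ)
    (hgrowth : ∀ t ∈ Icc (-T) T, ∀ x, ‖v t x‖ ≤ κ * (‖x‖ + 1)) {tl t₀ tr : ℝ}
    (hsub : Icc tl tr ⊆ Icc (-T) T) (ht₀ : t₀ ∈ Icc tl tr)
    (hr : tr - t₀ ≤ (2 * κ)⁻¹) (hl : t₀ - tl ≤ (2 * κ)⁻¹) (x₀ : E) :
    ∃ X : ℝ → E, X t₀ = x₀ ∧ ∀ t ∈ Icc tl tr, HasDerivWithinAt X (v t (X t)) (Icc tl tr) t := by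
  obtain ⟨K, hK⟩ := hlip T (2 * ‖x₀‖ + 1)
  have hball : closedBall x₀ (‖x₀‖ + 1) ⊆ closedBall 0 (2 * ‖x₀‖ + 1) :=
    closedBall_subset_closedBall' (by rw [dist_zero_right]; linarith)
  have hpl : IsPicardLindelof v (⟨t₀, ht₀⟩ : Icc tl tr) x₀ (‖x₀‖₊ + 1) 0
      (Real.toNNReal (2 * κ * (‖x₀‖ + 1))) K := by
    have ha : ((‖x₀‖₊ + 1 : ℝ≥0) : ℝ) = ‖x₀‖ + 1 := by push_cast; rfl
    refine ⟨fun t ht => ?_, fun x _ => (hcont x).continuousOn, fun t ht x hx => ?_, ?_⟩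
    · rw [ha]; exact (hK t (hsub ht)).mono hball
    · rw [ha, mem_closedBall, dist_eq_norm] at hx
      rw [Real.coe_toNNReal _ (by positivity)]
      calc ‖v t x‖ ≤ κ * (‖x‖ + 1) := hgrowth t (hsub ht) x
        _ ≤ κ * (‖x₀‖ + (‖x₀‖ + 1) + 1) := by
            gcongr; linarith [norm_le_norm_add_norm_sub' x x₀]
        _ = 2 * κ * (‖x₀‖ + 1) := by ring
    · rw [ha, Real.coe_toNNReal _ (by positivity), NNReal.coe_zero, sub_zero]
      calc 2 * κ * (‖x₀‖ + 1) * max (tr - t₀) (t₀ - tl)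
          ≤ 2 * κ * (‖x₀‖ + 1) * (2 * κ)⁻¹ := by gcongr; exact max_le hr hl
        _ = ‖x₀‖ + 1 := by field_simp
  exact hpl.exists_eq_forall_mem_Icc_hasDerivWithinAt₀

include hcont hlip in
theorem exists_hasDerivWithinAt_Icc_of_linearGrowth
    (hgrowth : ∀ T : ℝ, ∃ κ > 0, ∀ t ∈ Icc (-T) T, ∀ x, ‖v t x‖ ≤ κ * (‖x‖ + 1))
    (x₀ : E) {T : ℝ} (hT : 0 ≤ T) :
    ∃ X : ℝ → E, X 0 = x₀ ∧ ∀ t ∈ Icc (-T) T, HasDerivWithinAt X (v t (X t)) (Icc (-T) T) t := by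
  obtain ⟨κ, hκ, hκT⟩ := hgrowth T
  set τ := (2 * κ)⁻¹
  have hτ : 0 < τ := by positivity
  let P : ℝ → Prop := fun s => ∃ X : ℝ → E, X 0 = x₀ ∧
    ∀ t ∈ Icc (-s) s, HasDerivWithinAt X (v t (X t)) (Icc (-s) s) t
  have hstep : ∀ s s', 0 ≤ s → s ≤ s' → s' ≤ T → s' - s ≤ τ → P s → P s' := by
    rintro s s' hs hss' hs'T hτs ⟨X, hX0, hX⟩
    obtain ⟨Yr, hYr0, hYr⟩ := exists_hasDerivWithinAt_Icc_of_norm_le hlip hcont hκ hκT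
      (Icc_subset_Icc (by linarith) hs'T) (left_mem_Icc.mpr hss') hτs
      (by rw [sub_self]; exact hτ.le) (X s)
    obtain ⟨Z, hZX, -, hZ⟩ :=
      exists_eqOn_hasDerivWithinAt_Icc_of_eq (by linarith) hss' hX hYr hYr0.symm
    obtain ⟨Yl, hYl0, hYl⟩ := exists_hasDerivWithinAt_Icc_of_norm_le hlip hcont hκ hκT
      (tl := -s') (t₀ := -s) (tr := -s) (Icc_subset_Icc (by linarith) (by linarith))
      (right_mem_Icc.mpr (by linarith)) (by rw [sub_self]; exact hτ.le) (by linarith) (Z (-s))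
    obtain ⟨Z', -, hZ'Z, hZ'⟩ :=
      exists_eqOn_hasDerivWithinAt_Icc_of_eq (by linarith) (by linarith) hYl hZ hYl0
    refine ⟨Z', ?_, hZ'⟩
    rw [hZ'Z ⟨by linarith, by linarith⟩, hZX ⟨by linarith, hs⟩, hX0]
  have hP : ∀ k : ℕ, P (min (k * τ) T) := by
    intro k
    induction k with
    | zero =>
      obtain ⟨X, hX0, hX⟩ := exists_hasDerivWithinAt_Icc_of_norm_le hlip hcont hκ hκT
        (Icc_subset_Icc (by linarith) hT) (left_mem_Icc.mpr le_rfl)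
        (by rw [sub_self]; exact hτ.le) (by rw [sub_self]; exact hτ.le) x₀
      exact ⟨X, hX0, by simpa [min_eq_left hT] using hX⟩
    | succ k ih =>
      refine hstep _ _ (le_min (by positivity) hT) (min_le_min_right _ (by push_cast; linarith))
        (min_le_right _ _) ?_ ih
      calc min ((k + 1 : ℕ) * τ) T - min (k * τ) T
          ≤ min (k * τ + τ) (T + τ) - min (k * τ) T :=
            sub_le_sub_right (min_le_min (by push_cast; linarith) (by linarith)) _
        _ = τ := by rw [min_add_add_right]; ring
  obtain ⟨k, hk⟩ := exists_nat_ge (T / τ)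
  have hkT : T ≤ k * τ := (div_le_iff₀ hτ).mp hk
  simpa only [P, min_eq_right hkT] using hP k

include hcont hlip in
theorem exists_hasDerivAt_of_linearGrowth
    (hgrowth : ∀ T : ℝ, ∃ κ > 0, ∀ t ∈ Icc (-T) T, ∀ x, ‖v t x‖ ≤ κ * (‖x‖ + 1)) (x₀ : E) :
    ∃ X : ℝ → E, X 0 = x₀ ∧ ∀ t, HasDerivAt X (v t (X t)) t := by
  choose Xs hXs0 hXs using fun n : ℕ =>
    exists_hasDerivWithinAt_Icc_of_linearGrowth hlip hcont hgrowth x₀ (T := n + 1) (by positivity)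
  have hXs' : ∀ (n : ℕ) (t : ℝ), |t| < n + 1 → HasDerivAt (Xs n) (v t (Xs n t)) t := fun n t ht =>
    (hXs n t (Ioo_subset_Icc_self (abs_lt.mp ht))).hasDerivAt
      (Icc_mem_nhds (abs_lt.mp ht).1 (abs_lt.mp ht).2)
  have hagree : ∀ m n : ℕ, m ≤ n → ∀ t : ℝ, |t| < m + 1 → Xs m t = Xs n t := by
    intro m n hmn t ht
    have hm : (0 : ℝ) ≤ m := m.cast_nonneg
    have hmn' : (m : ℝ) + 1 ≤ n + 1 := by exact_mod_cast Nat.add_le_add_right hmn 1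
    refine eqOn_Icc_of_hasDerivAt hlip (t₀ := 0) ⟨by linarith, by linarith⟩
      (fun s hs => (hXs m s hs).continuousWithinAt)
      (fun s hs => hXs' m s (abs_lt.mpr hs))
      (fun s hs => ((hXs n s ⟨by linarith [hs.1], by linarith [hs.2]⟩).continuousWithinAt.mono
        (Icc_subset_Icc (by linarith) hmn')))
      (fun s hs => hXs' n s (by rw [abs_lt]; constructor <;> linarith [hs.1, hs.2]))
      ((hXs0 m).trans (hXs0 n).symm) (abs_le.mp ht.le)
  refine ⟨fun t => Xs ⌊|t|⌋₊ t, by simpa using hXs0 0, fun t => ?_⟩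
  have hN := Nat.lt_floor_add_one |t|
  refine (hXs' _ t hN).congr_of_eventuallyEq ?_
  filter_upwards [(isOpen_lt continuous_abs continuous_const).mem_nhds hN] with s hs
  exact hagree _ _ (Nat.le_of_lt_succ ((Nat.floor_lt (abs_nonneg s)).mpr (by simpa using hs)))
    s (Nat.lt_floor_add_one |s|)

end LinearGrowthODE

noncomputable def odeField (g : ℝ → ℝ) (σ θ α t : ℝ) (x : ℝ × ℝ) : ℝ × ℝ :=
  (x.2, 2 / σ ^ 2 * (g x.1 * x.2 + θ * t * x.2 + (θ + α) * x.1))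

section OdeField

variable {g : ℝ → ℝ} {σ θ α M : ℝ} {K : ℝ≥0}

theorem continuous_odeField_time (x : ℝ × ℝ) : Continuous (odeField g σ θ α · x) := by
  unfold odeField; fun_prop

theorem norm_odeField_le (hgM : ∀ y, |g y| ≤ M) {T t : ℝ} (ht : t ∈ Icc (-T) T) (x : ℝ × ℝ) :
    ‖odeField g σ θ α t x‖ ≤ (1 + |2 / σ ^ 2| * (M + |θ| * |T| + |θ + α|)) * (‖x‖ + 1) := by
  have hM : 0 ≤ M := (abs_nonneg _).trans (hgM 0)
  have hx₁ : |x.1| ≤ ‖x‖ := norm_fst_le x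
  have hx₂ : |x.2| ≤ ‖x‖ := norm_snd_le x
  have hrhs : |g x.1 * x.2 + θ * t * x.2 + (θ + α) * x.1| ≤ (M + |θ| * |T| + |θ + α|) * ‖x‖ :=
    calc _ ≤ |g x.1| * |x.2| + |θ| * |t| * |x.2| + |θ + α| * |x.1| := by
          simpa only [abs_mul] using abs_add_three (g x.1 * x.2) (θ * t * x.2) ((θ + α) * x.1)
      _ ≤ M * ‖x‖ + |θ| * |T| * ‖x‖ + |θ + α| * ‖x‖ := by
          have ht' : |t| ≤ |T| := (abs_le.mpr ht).trans (le_abs_self T)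
          have := mul_le_mul (hgM x.1) hx₂ (abs_nonneg _) hM
          have := mul_le_mul (mul_le_mul_of_nonneg_left ht' (abs_nonneg θ)) hx₂ (abs_nonneg _)
            (by positivity)
          have := mul_le_mul_of_nonneg_left hx₁ (abs_nonneg (θ + α))
          linarith
      _ = _ := by ring
  have hκ : 0 ≤ |2 / σ ^ 2| * (M + |θ| * |T| + |θ + α|) := by positivity
  calc ‖odeField g σ θ α t x‖
      ≤ max ‖x‖ (|2 / σ ^ 2| * ((M + |θ| * |T| + |θ + α|) * ‖x‖)) := by
        rw [odeField, Prod.norm_mk, Real.norm_eq_abs, Real.norm_eq_abs, abs_mul]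
        gcongr
    _ ≤ (1 + |2 / σ ^ 2| * (M + |θ| * |T| + |θ + α|)) * (‖x‖ + 1) := by
        rw [← mul_assoc]
        apply max_le <;> nlinarith [norm_nonneg x]

theorem lipschitzOnWith_odeField (hgK : LipschitzWith K g) (hgM : ∀ y, |g y| ≤ M) {T t ρ : ℝ}
    (ht : t ∈ Icc (-T) T) :
    LipschitzOnWith (Real.toNNReal (1 + |2 / σ ^ 2| * (M + K * ρ + |θ| * T + |θ + α|)))
      (odeField g σ θ α t) (closedBall 0 ρ) := by
  refine LipschitzOnWith.of_dist_le_mul fun x _ y hy => ?_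
  have hT : 0 ≤ T := by linarith [ht.1, ht.2]
  have hM : 0 ≤ M := (abs_nonneg _).trans (hgM 0)
  have hy₂ : |y.2| ≤ ρ := (norm_snd_le y).trans (mem_closedBall_zero_iff.mp hy)
  have hρ : 0 ≤ ρ := (abs_nonneg _).trans hy₂
  set d := dist x y
  have hd₁ : |x.1 - y.1| ≤ d := by simpa [d, dist_eq_norm] using norm_fst_le (x - y)
  have hd₂ : |x.2 - y.2| ≤ d := by simpa [d, dist_eq_norm] using norm_snd_le (x - y)
  have hg : |g x.1 - g y.1| ≤ K * d :=
    (hgK.dist_le_mul x.1 y.1).trans (by rw [Real.dist_eq]; gcongr)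
  have hrhs : |(g x.1 * x.2 + θ * t * x.2 + (θ + α) * x.1)
      - (g y.1 * y.2 + θ * t * y.2 + (θ + α) * y.1)|
      ≤ (M + K * ρ + |θ| * T + |θ + α|) * d :=
    calc _ = |g x.1 * (x.2 - y.2) + (g x.1 - g y.1) * y.2 + θ * t * (x.2 - y.2)
          + (θ + α) * (x.1 - y.1)| := by ring_nf
      _ ≤ |g x.1| * |x.2 - y.2| + |g x.1 - g y.1| * |y.2| + |θ| * |t| * |x.2 - y.2|
          + |θ + α| * |x.1 - y.1| := by
          refine (abs_add_le _ _).trans ?_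
          simpa only [abs_mul, add_le_add_iff_right] using
            abs_add_three (g x.1 * (x.2 - y.2)) ((g x.1 - g y.1) * y.2) (θ * t * (x.2 - y.2))
      _ ≤ M * d + K * d * ρ + |θ| * T * d + |θ + α| * d := by
          gcongr
          exacts [hgM _, abs_le.mpr ht]
      _ = _ := by ring
  have hκ : 0 ≤ |2 / σ ^ 2| * (M + K * ρ + |θ| * T + |θ + α|) := by positivity
  rw [Real.coe_toNNReal _ (by positivity), Prod.dist_eq, Real.dist_eq, Real.dist_eq, odeField,
    odeField, ← mul_sub, abs_mul]
  apply max_le <;> nlinarith [dist_nonneg (x := x) (y := y),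
    mul_le_mul_of_nonneg_left hrhs (abs_nonneg (2 / σ ^ 2))]

theorem exists_hasDerivAt_odeField (hgK : LipschitzWith K g) (hgM : ∀ y, |g y| ≤ M)
    (x₀ : ℝ × ℝ) :
    ∃ X : ℝ → ℝ × ℝ, X 0 = x₀ ∧ ∀ t, HasDerivAt X (odeField g σ θ α t (X t)) t := by
  have hM : 0 ≤ M := (abs_nonneg _).trans (hgM 0)
  exact exists_hasDerivAt_of_linearGrowth
    (fun T ρ => ⟨_, fun t ht => lipschitzOnWith_odeField (ρ := ρ) hgK hgM ht⟩)
    continuous_odeField_time (fun T => ⟨_, by positivity, fun t ht => norm_odeField_le hgM ht⟩) x₀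

variable {C h : ℝ → ℝ} {δ p r : ℝ}

theorem solvesFtildeODE_of_hasDerivAt (hσ : σ ≠ 0) (hF : deriv (Ftilde C h δ) = g)
    (hg : Continuous g) {X : ℝ → ℝ × ℝ} (hX0 : X 0 = (-p, r))
    (hX : ∀ t, HasDerivAt X (odeField g σ θ α t (X t)) t) :
    SolvesFtildeODE C h δ σ θ α p r fun t => (X t).1 := by
  have hW : ∀ t, HasDerivAt (fun t => (X t).1) (X t).2 t := fun t =>
    (ContinuousLinearMap.fst ℝ ℝ ℝ).hasFDerivAt.comp_hasDerivAt t (hX t)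
  have hW' : ∀ t, HasDerivAt (fun t => (X t).2)
      (2 / σ ^ 2 * (g (X t).1 * (X t).2 + θ * t * (X t).2 + (θ + α) * (X t).1)) t := fun t =>
    (ContinuousLinearMap.snd ℝ ℝ ℝ).hasFDerivAt.comp_hasDerivAt t (hX t)
  have hXc : Continuous X := continuous_iff_continuousAt.mpr fun t => (hX t).continuousAt
  have hdW : deriv (fun t => (X t).1) = fun t => (X t).2 := funext fun t => (hW t).deriv
  have hdW' : deriv (fun t => (X t).2) = fun t =>
      2 / σ ^ 2 * (g (X t).1 * (X t).2 + θ * t * (X t).2 + (θ + α) * (X t).1) :=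
    funext fun t => (hW' t).deriv
  refine ⟨?_, by simp [hX0], by simp [hdW, hX0], fun x _ => ?_⟩
  · rw [show (2 : WithTop ℕ∞) = 1 + 1 from rfl, contDiff_succ_iff_deriv, hdW,
      contDiff_one_iff_deriv, hdW']
    exact ⟨fun t => (hW t).differentiableAt, by simp, fun t => (hW' t).differentiableAt,
      by fun_prop⟩
  · rw [hdW, hdW', hF]
    field_simp
    ring

theorem SolvesFtildeODE.hasDerivAt_odeField {W : ℝ → ℝ} (hW : SolvesFtildeODE C h δ σ θ α p r W)
    (hσ : σ ≠ 0) (hF : deriv (Ftilde C h δ) = g) {t : ℝ} (ht : 0 ≤ t) :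
    HasDerivAt (fun s => (W s, deriv W s)) (odeField g σ θ α t (W t, deriv W t)) t := by
  obtain ⟨hW2, -, -, hode⟩ := hW
  convert ((hW2.differentiable two_ne_zero).differentiableAt.hasDerivAt).prodMk
    (hW2.differentiable_deriv_two t).hasDerivAt using 1
  have := hode t ht
  rw [hF] at this
  simp only [odeField, Prod.mk.injEq, true_and]
  field_simp
  linarith

theorem SolvesFtildeODE.eqOn (hσ : σ ≠ 0) (hF : deriv (Ftilde C h δ) = g)
    (hgK : LipschitzWith K g) (hgM : ∀ y, |g y| ≤ M) {W₁ W₂ : ℝ → ℝ}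
    (h₁ : SolvesFtildeODE C h δ σ θ α p r W₁) (h₂ : SolvesFtildeODE C h δ σ θ α p r W₂) :
    EqOn W₁ W₂ (Ici 0) := by
  intro x hx
  have hcont : ∀ {W}, SolvesFtildeODE C h δ σ θ α p r W →
      ContinuousOn (fun s => (W s, deriv W s)) (Icc 0 x) := fun hW =>
    (hW.1.continuous.prodMk (hW.1.continuous_deriv one_le_two)).continuousOn
  have := eqOn_Icc_of_hasDerivWithinAt_Ici (v := odeField g σ θ α)
    (fun T ρ => ⟨_, fun t ht => lipschitzOnWith_odeField (ρ := ρ) hgK hgM ht⟩)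
    (hcont h₁) (fun t ht => (h₁.hasDerivAt_odeField hσ hF ht.1).hasDerivWithinAt)
    (hcont h₂) (fun t ht => (h₂.hasDerivAt_odeField hσ hF ht.1).hasDerivWithinAt)
    (by rw [h₁.2.1, h₁.2.2.1, h₂.2.1, h₂.2.2.1]) (right_mem_Icc.mpr hx)
  exact congrArg Prod.fst this

end OdeField

theorem statement6_general
    (C h : ℝ → ℝ) (σ θ α p δ : ℝ)
    (hσ : 0 < σ)
    (hC2 : ContDiff ℝ 2 C)
    (hCconv : ConvexOn ℝ (Set.Ici 0) C)
    (hC'' : ∀ u ≥ (0 : ℝ), 0 < deriv (deriv C) u)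
    (hinv₁ : ∀ u ≥ (0 : ℝ), h (deriv C u) = u)
    (hinv₂ : ∀ y : ℝ, deriv C 0 ≤ y → y < 0 → 0 ≤ h y ∧ deriv C (h y) = y)
    (hδ0 : 0 < δ) (hδ : δ < min p (-deriv C 0)) :
    ∀ r ≥ (0 : ℝ),
      (∃ W : ℝ → ℝ, SolvesFtildeODE C h δ σ θ α p r W) ∧
      (∀ W₁ W₂ : ℝ → ℝ, SolvesFtildeODE C h δ σ θ α p r W₁ →
        SolvesFtildeODE C h δ σ θ α p r W₂ → ∀ x ≥ (0 : ℝ), W₁ x = W₂ x) := by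
  intro r _
  have hδ' : δ < -deriv C 0 := hδ.trans_le (min_le_right _ _)
  obtain ⟨K, hgK⟩ := exists_lipschitzWith_ftildeDeriv hC2 hC'' hinv₂ hδ0 hδ'
  have hgM : ∀ y, |ftildeDeriv C h δ y| ≤ h (-δ) := fun y => by
    have := ftildeDeriv_mem_Icc hC2 hC'' hinv₂ hδ0 hδ' y
    rw [abs_of_nonneg this.1]
    exact this.2
  have hF : deriv (Ftilde C h δ) = ftildeDeriv C h δ :=
    funext fun y => (hasDerivAt_Ftilde hCconv hC2 hC'' hinv₁ hinv₂ hδ0 hδ' y).deriv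
  refine ⟨?_, fun W₁ W₂ h₁ h₂ => h₁.eqOn hσ.ne' hF hgK hgM h₂⟩
  obtain ⟨X, hX0, hX⟩ := exists_hasDerivAt_odeField (σ := σ) (θ := θ) (α := α) hgK hgM (-p, r)
  exact ⟨_, solvesFtildeODE_of_hasDerivAt hσ.ne' hF hgK.continuous hX0 hX⟩

/-- For every `r ≥ 0` the `F̃`-ODE with initial slope `r` has a global solution on `[0,∞)`, and
any two solutions agree on `[0,∞)` (existence and uniqueness). -/
theorem statement6
    (C h : ℝ → ℝ) (σ θ α p δ : ℝ)
    (hσ : 0 < σ) (hθ : 0 < θ) (hα : 0 < α) (hp : 0 < p)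
    (hC2 : ContDiff ℝ 2 C)
    (hCanti : AntitoneOn C (Set.Ici 0))
    (hCconv : ConvexOn ℝ (Set.Ici 0) C)
    (hC0 : 0 < C 0)
    (hClim : Tendsto C atTop (nhds 0))
    (hC'' : ∀ u ≥ (0 : ℝ), 0 < deriv (deriv C) u)
    (hC'0 : deriv C 0 < 0)
    (hinv₁ : ∀ u ≥ (0 : ℝ), h (deriv C u) = u)
    (hinv₂ : ∀ y : ℝ, deriv C 0 ≤ y → y < 0 → 0 ≤ h y ∧ deriv C (h y) = y)
    (hδ0 : 0 < δ) (hδ : δ < min p (-deriv C 0)) :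
    ∀ r ≥ (0 : ℝ),
      (∃ W : ℝ → ℝ, SolvesFtildeODE C h δ σ θ α p r W) ∧
      (∀ W₁ W₂ : ℝ → ℝ, SolvesFtildeODE C h δ σ θ α p r W₁ →
        SolvesFtildeODE C h δ σ θ α p r W₂ → ∀ x ≥ (0 : ℝ), W₁ x = W₂ x) :=
  statement6_general C h σ θ α p δ hσ hC2 hCconv hC'' hinv₁ hinv₂ hδ0 hδ
end

section
/- Let r ≥ 0, a > 0, and suppose W : [0, a] → ℝ is continuously differentiable with W(0) = −p, −p ≤ W(x) ≤ 0 for all x ∈ [0, a], and (σ²/2)·W'(x) = F̃(W(x)) + θ·x·W(x) + α·∫₀ˣ W(v) dv + (σ²/2)·r − F̃(−p) for all x ∈ [0, a]. Then for every s ∈ [0, a], W(s) ≥ −p + (r − 2·C(0)/σ²)·s − (p·(θ+α)/σ²)·s². -/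
/-!
Since `C ≥ 0`, the Legendre transform satisfies `-C(0) ≤ F ≤ 0` on `(-∞, 0]`, so `F̃ ≥ -C(0)`
everywhere while `F̃(-p) = F(-p) ≤ 0`. Bounding `W ≥ -p` inside the equation then gives
`W'(x) ≥ r - 2C(0)/σ² - 2p(θ+α)x/σ²`, and integrating from `W(0) = -p` gives the quadratic bound.
-/

open Set Filter

open Topology

theorem AntitoneOn.le_of_tendsto_atTop {α β : Type*} [SemilatticeSup α] [Nonempty α]
    [TopologicalSpace β] [Preorder β] [OrderClosedTopology β] {f : α → β} {a : α} {L : β}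
    (hf : AntitoneOn f (Ici a)) (hlim : Tendsto f atTop (𝓝 L)) {u : α} (hu : a ≤ u) :
    L ≤ f u :=
  le_of_tendsto hlim ((eventually_ge_atTop u).mono fun _ hv => hf hu (hu.trans hv) hv)

section LegendreTransform

variable {C : ℝ → ℝ}

theorem zero_mem_upperBounds_LF_set (hC : ∀ u ≥ (0 : ℝ), 0 ≤ C u) {y : ℝ} (hy : y ≤ 0) :
    (0 : ℝ) ∈ upperBounds ((fun u => u * y - C u) '' Ici 0) := by
  rintro _ ⟨u, hu, rfl⟩
  linarith [mul_nonpos_of_nonneg_of_nonpos hu hy, hC u hu]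

theorem LF_nonpos (hC : ∀ u ≥ (0 : ℝ), 0 ≤ C u) {y : ℝ} (hy : y ≤ 0) : LF C y ≤ 0 :=
  csSup_le (nonempty_Ici.image _) (zero_mem_upperBounds_LF_set hC hy)

theorem neg_le_LF (hC : ∀ u ≥ (0 : ℝ), 0 ≤ C u) {y : ℝ} (hy : y ≤ 0) : -C 0 ≤ LF C y := by
  show _ ≤ sSup _
  simpa using le_csSup ⟨0, zero_mem_upperBounds_LF_set hC hy⟩
    (mem_image_of_mem (fun u => u * y - C u) (self_mem_Ici : (0 : ℝ) ∈ Ici 0))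

theorem Ftilde_of_le {h : ℝ → ℝ} {δ y : ℝ} (hy : y ≤ -δ) : Ftilde C h δ y = LF C y :=
  if_pos hy

theorem neg_le_Ftilde (hC : ∀ u ≥ (0 : ℝ), 0 ≤ C u) {h : ℝ → ℝ} {δ : ℝ} (hh : 0 ≤ h (-δ))
    (hδ : 0 ≤ δ) (y : ℝ) : -C 0 ≤ Ftilde C h δ y := by
  unfold Ftilde
  split_ifs with hy
  · exact neg_le_LF hC (by linarith)
  · have hyδ : 0 ≤ y + δ := by linarith [not_le.1 hy]
    linarith [neg_le_LF hC (neg_nonpos.2 hδ), mul_nonneg hh hyδ]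

end LegendreTransform

section IntegroDifferentialEquation

variable {F W : ℝ → ℝ} {σ θ α p r K : ℝ}

theorem deriv_ge_of_integroDiff_eq (hσ : 0 < σ) (hθ : 0 ≤ θ) (hα : 0 ≤ α) (hW : Continuous W)
    (hF : ∀ y, -K ≤ F y) (hFp : F (-p) ≤ 0) {x : ℝ} (hx : 0 ≤ x)
    (hlow : ∀ v ∈ Icc 0 x, -p ≤ W v)
    (heq : σ ^ 2 / 2 * deriv W x
      = F (W x) + θ * x * W x + α * (∫ v in (0 : ℝ)..x, W v) + (σ ^ 2 / 2 * r - F (-p))) :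
    r - 2 * K / σ ^ 2 - 2 * (p * (θ + α) / σ ^ 2) * x ≤ deriv W x := by
  have hint : -p * x ≤ ∫ v in (0 : ℝ)..x, W v := by
    simpa [mul_comm] using intervalIntegral.integral_mono_on (μ := MeasureTheory.volume) hx
      (continuous_const.intervalIntegrable 0 x) (hW.intervalIntegrable 0 x) hlow
  rw [← mul_le_mul_iff_of_pos_left (by positivity : (0 : ℝ) < σ ^ 2 / 2), heq]
  calc σ ^ 2 / 2 * (r - 2 * K / σ ^ 2 - 2 * (p * (θ + α) / σ ^ 2) * x)
      = -K + θ * x * (-p) + α * (-p * x) + σ ^ 2 / 2 * r := by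
        field_simp
        ring
    _ ≤ F (W x) + θ * x * W x + α * (∫ v in (0 : ℝ)..x, W v) + (σ ^ 2 / 2 * r - F (-p)) := by
        linarith [hF (W x), mul_le_mul_of_nonneg_left (hlow x ⟨hx, le_rfl⟩) (mul_nonneg hθ hx),
          mul_le_mul_of_nonneg_left hint hα]

theorem quadratic_le_of_integroDiff_eq (hσ : 0 < σ) (hθ : 0 ≤ θ) (hα : 0 ≤ α) {a : ℝ}
    (hW : ContDiff ℝ 1 W) (hW0 : W 0 = -p) (hlow : ∀ x ∈ Icc 0 a, -p ≤ W x)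
    (hF : ∀ y, -K ≤ F y) (hFp : F (-p) ≤ 0)
    (heq : ∀ x ∈ Icc 0 a, σ ^ 2 / 2 * deriv W x
      = F (W x) + θ * x * W x + α * (∫ v in (0 : ℝ)..x, W v) + (σ ^ 2 / 2 * r - F (-p))) :
    ∀ s ∈ Icc 0 a, -p + (r - 2 * K / σ ^ 2) * s - p * (θ + α) / σ ^ 2 * s ^ 2 ≤ W s := by
  set c := r - 2 * K / σ ^ 2
  set m := p * (θ + α) / σ ^ 2
  have hWd := hW.differentiable one_ne_zero
  have hquad (x : ℝ) : HasDerivAt (fun x => -p + c * x - m * x ^ 2) (c - 2 * m * x) x := by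
    refine ((((hasDerivAt_id' x).const_mul c).const_add (-p)).sub
      ((hasDerivAt_pow 2 x).const_mul m)).congr_deriv ?_
    norm_num
    ring
  refine image_le_of_deriv_right_le_deriv_boundary (by fun_prop)
    (fun x _ => (hquad x).hasDerivWithinAt) (by simp [hW0]) hWd.continuous.continuousOn
    (fun x _ => (hWd x).hasDerivAt.hasDerivWithinAt) fun x hx => ?_
  exact deriv_ge_of_integroDiff_eq hσ hθ hα hWd.continuous hF hFp hx.1
    (fun v hv => hlow v ⟨hv.1, hv.2.trans hx.2.le⟩) (heq x (Ico_subset_Icc_self hx))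

end IntegroDifferentialEquation

theorem statement14_general
    (C h : ℝ → ℝ) (σ θ α p δ : ℝ)
    (hσ : 0 < σ) (hθ : 0 < θ) (hα : 0 < α)
    (hCanti : AntitoneOn C (Set.Ici 0))
    (hClim : Tendsto C atTop (nhds 0))
    (hinv₂ : ∀ y : ℝ, deriv C 0 ≤ y → y < 0 → 0 ≤ h y ∧ deriv C (h y) = y)
    (hδ0 : 0 < δ) (hδ : δ < min p (-deriv C 0))
    (r a : ℝ)
    (W : ℝ → ℝ) (hW : ContDiff ℝ 1 W)
    (hW0 : W 0 = -p)
    (hbd : ∀ x ∈ Set.Icc (0 : ℝ) a, -p ≤ W x ∧ W x ≤ 0)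
    (heq : ∀ x ∈ Set.Icc (0 : ℝ) a,
      σ ^ 2 / 2 * deriv W x
        = Ftilde C h δ (W x) + θ * x * W x + α * (∫ v in (0 : ℝ)..x, W v)
          + (σ ^ 2 / 2 * r - Ftilde C h δ (-p))) :
    ∀ s ∈ Set.Icc (0 : ℝ) a,
      -p + (r - 2 * C 0 / σ ^ 2) * s - p * (θ + α) / σ ^ 2 * s ^ 2 ≤ W s := by
  have hCnn : ∀ u ≥ (0 : ℝ), 0 ≤ C u := fun u hu => hCanti.le_of_tendsto_atTop hClim hu
  have hδp : δ < p := hδ.trans_le (min_le_left _ _)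
  have hδC : δ < -deriv C 0 := hδ.trans_le (min_le_right _ _)
  have hhδ : 0 ≤ h (-δ) := (hinv₂ (-δ) (by linarith) (by linarith)).1
  have hFp : Ftilde C h δ (-p) ≤ 0 := by
    rw [Ftilde_of_le (by linarith)]
    exact LF_nonpos hCnn (by linarith)
  exact quadratic_le_of_integroDiff_eq hσ hθ.le hα.le hW hW0 (fun x hx => (hbd x hx).1)
    (neg_le_Ftilde hCnn hhδ hδ0.le) hFp heq

/-- Quadratic lower bound: if `W` is continuously differentiable on `[0, a]` with `W(0) = -p`,
`-p ≤ W ≤ 0` there, and `(σ²/2)W'(x) = F̃(W(x)) + θxW(x) + α∫₀ˣW + (σ²/2)r − F̃(-p)`, then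
`W(s) ≥ -p + (r − 2C(0)/σ²)s − (p(θ+α)/σ²)s²` for every `s ∈ [0, a]`. -/
theorem statement14
    (C h : ℝ → ℝ) (σ θ α p δ : ℝ)
    (hσ : 0 < σ) (hθ : 0 < θ) (hα : 0 < α) (hp : 0 < p)
    (hC2 : ContDiff ℝ 2 C)
    (hCanti : AntitoneOn C (Set.Ici 0))
    (hCconv : ConvexOn ℝ (Set.Ici 0) C)
    (hC0 : 0 < C 0)
    (hClim : Tendsto C atTop (nhds 0))
    (hC'' : ∀ u ≥ (0 : ℝ), 0 < deriv (deriv C) u)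
    (hC'0 : deriv C 0 < 0)
    (hinv₁ : ∀ u ≥ (0 : ℝ), h (deriv C u) = u)
    (hinv₂ : ∀ y : ℝ, deriv C 0 ≤ y → y < 0 → 0 ≤ h y ∧ deriv C (h y) = y)
    (hδ0 : 0 < δ) (hδ : δ < min p (-deriv C 0))
    (r a : ℝ) (hr : 0 ≤ r) (ha : 0 < a)
    (W : ℝ → ℝ) (hW : ContDiff ℝ 1 W)
    (hW0 : W 0 = -p)
    (hbd : ∀ x ∈ Set.Icc (0 : ℝ) a, -p ≤ W x ∧ W x ≤ 0)
    (heq : ∀ x ∈ Set.Icc (0 : ℝ) a,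
      σ ^ 2 / 2 * deriv W x
        = Ftilde C h δ (W x) + θ * x * W x + α * (∫ v in (0 : ℝ)..x, W v)
          + (σ ^ 2 / 2 * r - Ftilde C h δ (-p))) :
    ∀ s ∈ Set.Icc (0 : ℝ) a,
      -p + (r - 2 * C 0 / σ ^ 2) * s - p * (θ + α) / σ ^ 2 * s ^ 2 ≤ W s :=
  statement14_general C h σ θ α p δ hσ hθ hα hCanti hClim hinv₂ hδ0 hδ r a W hW hW0 hbd heq
end
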